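/- arXiv:1510.00027 — 3 statements merged into one kernel-verified Lean document; each statement's English description precedes it below -/
import Mathlib

section
/- Global reliability identity for the H(curl) error estimator (Theorem 4.1, global bound): Let (u, cu), (u_T, cu_T), (σ, cσ), (σ_T, cσ_T) be curl pairs and let f be a square-ν-integrable vector field. Assume (i) σ = μ⁻¹ cu holds ν-a.e. on Ω (the constitutive relation defining the magnetizing field), (ii) cσ + β u = f holds ν-a.e. on Ω (the magnetizing-field equation), and (iii) the integration-by-parts identity ∫ (σ − σ_T)·(cu − cu_T) dν = ∫ (cσ − cσ_T)·(u − u_T) dν holds (as satisfied by the errors of conforming approximations with vanishing tangential traces on the respective boundary parts). Then the estimator satisfies the exact identity η² = |||u − u_T|||²_{μ,β} + |||σ − σ_T|||²_{β,μ}, i.e. ∫ μ⁻¹|μ σ_T − cu_T|² dν + ∫ β⁻¹|cσ_T + β u_T − f|² dν = ∫ (μ⁻¹|cu − cu_T|² + β|u − u_T|²) dν + ∫ (β⁻¹|cσ − cσ_T|² + μ|σ − σ_T|²) dν. -/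
/-!
With the exact relations `μ σ = cu` and `cσ + β u = f`, the two residuals are
`μ σ_T - cu_T = (cu - cu_T) + μ (σ_T - σ)` and `cσ_T + β u_T - f = -((cσ - cσ_T) + β (u - u_T))`.
Expanding `w⁻¹ ‖v + w e‖² = w⁻¹ ‖v‖² + w ‖e‖² + 2 ⟪v, e⟫` pointwise produces the two energy
errors plus the cross terms `-2 ∫ ⟪σ - σ_T, cu - cu_T⟫` and `2 ∫ ⟪cσ - cσ_T, u - u_T⟫`, which
cancel by the integration-by-parts identity.
-/

open MeasureTheory RealInnerProductSpace

section Pointwise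

variable {E : Type*} [NormedAddCommGroup E] [InnerProductSpace ℝ E]

theorem inv_mul_norm_add_smul_sq {w : ℝ} (hw : w ≠ 0) (v e : E) :
    w⁻¹ * ‖v + w • e‖ ^ 2 = w⁻¹ * ‖v‖ ^ 2 + w * ‖e‖ ^ 2 + 2 * ⟪v, e⟫ := by
  rw [norm_add_sq_real, real_inner_smul_right, norm_smul, mul_pow, Real.norm_eq_abs, sq_abs]
  field_simp
  ring

theorem norm_le_and_norm_inv_le_of_mem_Icc {a b t : ℝ} (ha : 0 < a) (ht : a ≤ t ∧ t ≤ b) :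
    ‖t‖ ≤ b ∧ ‖t⁻¹‖ ≤ a⁻¹ := by
  have ht₀ : 0 < t := ha.trans_le ht.1
  rw [Real.norm_of_nonneg ht₀.le, Real.norm_of_nonneg (inv_nonneg.2 ht₀.le)]
  exact ⟨ht.2, inv_anti₀ ha ht.1⟩

end Pointwise

namespace MeasureTheory

variable {Ω E : Type*} [MeasurableSpace Ω] {ν : Measure Ω} [NormedAddCommGroup E]

theorem MemLp.integrable_mul_norm_sq {w : Ω → ℝ} {C : ℝ} (hw : AEStronglyMeasurable w ν)
    (hwC : ∀ᵐ x ∂ν, ‖w x‖ ≤ C) {v : Ω → E} (hv : MemLp v 2 ν) :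
    Integrable (fun x => w x * ‖v x‖ ^ 2) ν :=
  ((memLp_two_iff_integrable_sq_norm hv.1).1 hv).bdd_mul hw hwC

variable {w : Ω → ℝ} {a b : ℝ} {v e : Ω → E}

theorem MemLp.integrable_weight_mul_norm_sq (ha : 0 < a) (hw : AEMeasurable w ν)
    (hwab : ∀ᵐ x ∂ν, a ≤ w x ∧ w x ≤ b) (hv : MemLp v 2 ν) :
    Integrable (fun x => w x * ‖v x‖ ^ 2) ν :=
  hv.integrable_mul_norm_sq hw.aestronglyMeasurable
    (hwab.mono fun _ hx => (norm_le_and_norm_inv_le_of_mem_Icc ha hx).1)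

theorem MemLp.integrable_inv_weight_mul_norm_sq (ha : 0 < a) (hw : AEMeasurable w ν)
    (hwab : ∀ᵐ x ∂ν, a ≤ w x ∧ w x ≤ b) (hv : MemLp v 2 ν) :
    Integrable (fun x => (w x)⁻¹ * ‖v x‖ ^ 2) ν :=
  hv.integrable_mul_norm_sq hw.inv.aestronglyMeasurable
    (hwab.mono fun _ hx => (norm_le_and_norm_inv_le_of_mem_Icc ha hx).2)

variable [InnerProductSpace ℝ E]

theorem MemLp.integrable_inner (hv : MemLp v 2 ν) (he : MemLp e 2 ν) :
    Integrable (fun x => ⟪v x, e x⟫) ν :=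
  (L2.integrable_inner (𝕜 := ℝ) (hv.toLp v) (he.toLp e)).congr <| by
    filter_upwards [hv.coeFn_toLp, he.coeFn_toLp] with x hvx hex
    rw [hvx, hex]

theorem integral_inv_weight_mul_norm_add_smul_sq (ha : 0 < a) (hw : AEMeasurable w ν)
    (hwab : ∀ᵐ x ∂ν, a ≤ w x ∧ w x ≤ b) (hv : MemLp v 2 ν) (he : MemLp e 2 ν) :
    ∫ x, (w x)⁻¹ * ‖v x + w x • e x‖ ^ 2 ∂ν
      = (∫ x, (w x)⁻¹ * ‖v x‖ ^ 2 ∂ν) + (∫ x, w x * ‖e x‖ ^ 2 ∂ν)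
        + 2 * ∫ x, ⟪v x, e x⟫ ∂ν := by
  have hv' := hv.integrable_inv_weight_mul_norm_sq ha hw hwab
  have he' := he.integrable_weight_mul_norm_sq ha hw hwab
  have hsum : Integrable (fun x => (w x)⁻¹ * ‖v x‖ ^ 2 + w x * ‖e x‖ ^ 2) ν := hv'.add he'
  have hpointwise : ∀ᵐ x ∂ν, (w x)⁻¹ * ‖v x + w x • e x‖ ^ 2
      = (w x)⁻¹ * ‖v x‖ ^ 2 + w x * ‖e x‖ ^ 2 + 2 * ⟪v x, e x⟫ :=
    hwab.mono fun x hx => inv_mul_norm_add_smul_sq (ha.trans_le hx.1).ne' (v x) (e x)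
  rw [integral_congr_ae hpointwise, integral_add hsum ((hv.integrable_inner he).const_mul 2),
    integral_add hv' he', integral_const_mul]

end MeasureTheory

theorem estimator_global_reliability_identity_general
    {Ω : Type*} [MeasurableSpace Ω] (ν : Measure Ω)
    (μ β : Ω → ℝ) (m₁ m₂ b₁ b₂ : ℝ)
    (hm₁ : 0 < m₁) (hb₁ : 0 < b₁)
    (hμmeas : Measurable μ) (hβmeas : Measurable β)
    (hμbd : ∀ᵐ x ∂ν, m₁ ≤ μ x ∧ μ x ≤ m₂)
    (hβbd : ∀ᵐ x ∂ν, b₁ ≤ β x ∧ β x ≤ b₂)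
    (u cu uT cuT σ cσ σT cσT f : Ω → EuclideanSpace ℝ (Fin 3))
    (hu : MemLp u 2 ν) (hcu : MemLp cu 2 ν)
    (huT : MemLp uT 2 ν) (hcuT : MemLp cuT 2 ν)
    (hσ : MemLp σ 2 ν) (hcσ : MemLp cσ 2 ν)
    (hσT : MemLp σT 2 ν) (hcσT : MemLp cσT 2 ν)
    -- (i) constitutive relation defining the magnetizing field
    (hconst : ∀ᵐ x ∂ν, σ x = (μ x)⁻¹ • cu x)
    -- (ii) magnetizing-field equation
    (hmageq : ∀ᵐ x ∂ν, cσ x + β x • u x = f x)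
    -- (iii) integration-by-parts identity for the errors
    (hibp : ∫ x, ⟪σ x - σT x, cu x - cuT x⟫ ∂ν
          = ∫ x, ⟪cσ x - cσT x, u x - uT x⟫ ∂ν) :
    (∫ x, (μ x)⁻¹ * ‖μ x • σT x - cuT x‖ ^ 2 ∂ν)
      + ∫ x, (β x)⁻¹ * ‖cσT x + β x • uT x - f x‖ ^ 2 ∂ν
    = (∫ x, ((μ x)⁻¹ * ‖cu x - cuT x‖ ^ 2 + β x * ‖u x - uT x‖ ^ 2) ∂ν)
      + ∫ x, ((β x)⁻¹ * ‖cσ x - cσT x‖ ^ 2 + μ x * ‖σ x - σT x‖ ^ 2) ∂ν := by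
  have hμ := hμmeas.aemeasurable (μ := ν)
  have hβ := hβmeas.aemeasurable (μ := ν)
  have hres₁ : ∀ᵐ x ∂ν, (μ x)⁻¹ * ‖μ x • σT x - cuT x‖ ^ 2
      = (μ x)⁻¹ * ‖(cu x - cuT x) + μ x • (σT x - σ x)‖ ^ 2 := by
    filter_upwards [hμbd, hconst] with x hx hσx
    rw [hσx, smul_sub, smul_inv_smul₀ (hm₁.trans_le hx.1).ne']
    congr 3
    abel
  have hres₂ : ∀ᵐ x ∂ν, (β x)⁻¹ * ‖cσT x + β x • uT x - f x‖ ^ 2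
      = (β x)⁻¹ * ‖(cσ x - cσT x) + β x • (u x - uT x)‖ ^ 2 := by
    filter_upwards [hmageq] with x hfx
    rw [← hfx, ← norm_neg]
    congr 3
    module
  have hflip (x : Ω) : ⟪σ x - σT x, cu x - cuT x⟫ = -⟪cu x - cuT x, σT x - σ x⟫ := by
    rw [real_inner_comm, ← inner_neg_right, neg_sub]
  have hest₁ := integral_inv_weight_mul_norm_add_smul_sq hm₁ hμ hμbd (hcu.sub hcuT) (hσT.sub hσ)
  have hest₂ := integral_inv_weight_mul_norm_add_smul_sq hb₁ hβ hβbd (hcσ.sub hcσT) (hu.sub huT)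
  have hcu' := (hcu.sub hcuT).integrable_inv_weight_mul_norm_sq hm₁ hμ hμbd
  have hu' := (hu.sub huT).integrable_weight_mul_norm_sq hb₁ hβ hβbd
  have hcσ' := (hcσ.sub hcσT).integrable_inv_weight_mul_norm_sq hb₁ hβ hβbd
  have hσ' := (hσ.sub hσT).integrable_weight_mul_norm_sq hm₁ hμ hμbd
  simp only [Pi.sub_apply, norm_sub_rev (σT _)] at hest₁ hest₂ hcu' hu' hcσ' hσ'
  simp only [hflip, integral_neg] at hibp
  rw [integral_congr_ae hres₁, integral_congr_ae hres₂, hest₁, hest₂,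
    integral_add hcu' hu', integral_add hcσ' hσ']
  linarith

/-- Global reliability identity for the H(curl) error estimator (Theorem 4.1,
global bound): under the constitutive relation `σ = μ⁻¹ cu`, the magnetizing-field
equation `cσ + β u = f`, and the integration-by-parts identity for the errors,
the estimator equals exactly the sum of the two squared weighted energy errors. -/
theorem estimator_global_reliability_identity
    {Ω : Type*} [MeasurableSpace Ω] (ν : Measure Ω)
    (μ β : Ω → ℝ) (m₁ m₂ b₁ b₂ : ℝ)
    (hm₁ : 0 < m₁) (hm₁₂ : m₁ ≤ m₂) (hb₁ : 0 < b₁) (hb₁₂ : b₁ ≤ b₂)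
    (hμmeas : Measurable μ) (hβmeas : Measurable β)
    (hμbd : ∀ᵐ x ∂ν, m₁ ≤ μ x ∧ μ x ≤ m₂)
    (hβbd : ∀ᵐ x ∂ν, b₁ ≤ β x ∧ β x ≤ b₂)
    (u cu uT cuT σ cσ σT cσT f : Ω → EuclideanSpace ℝ (Fin 3))
    (hu : MemLp u 2 ν) (hcu : MemLp cu 2 ν)
    (huT : MemLp uT 2 ν) (hcuT : MemLp cuT 2 ν)
    (hσ : MemLp σ 2 ν) (hcσ : MemLp cσ 2 ν)
    (hσT : MemLp σT 2 ν) (hcσT : MemLp cσT 2 ν)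
    (hf : MemLp f 2 ν)
    -- (i) constitutive relation defining the magnetizing field
    (hconst : ∀ᵐ x ∂ν, σ x = (μ x)⁻¹ • cu x)
    -- (ii) magnetizing-field equation
    (hmageq : ∀ᵐ x ∂ν, cσ x + β x • u x = f x)
    -- (iii) integration-by-parts identity for the errors
    (hibp : ∫ x, ⟪σ x - σT x, cu x - cuT x⟫ ∂ν
          = ∫ x, ⟪cσ x - cσT x, u x - uT x⟫ ∂ν) :
    (∫ x, (μ x)⁻¹ * ‖μ x • σT x - cuT x‖ ^ 2 ∂ν)
      + ∫ x, (β x)⁻¹ * ‖cσT x + β x • uT x - f x‖ ^ 2 ∂ν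
    = (∫ x, ((μ x)⁻¹ * ‖cu x - cuT x‖ ^ 2 + β x * ‖u x - uT x‖ ^ 2) ∂ν)
      + ∫ x, ((β x)⁻¹ * ‖cσ x - cσT x‖ ^ 2 + μ x * ‖σ x - σT x‖ ^ 2) ∂ν :=
  estimator_global_reliability_identity_general ν μ β m₁ m₂ b₁ b₂ hm₁ hb₁ hμmeas hβmeas hμbd hβbd u
    cu uT cuT σ cσ σT cσT f hu hcu huT hcuT hσ hcσ hσT hcσT hconst hmageq hibp
end

section
/- Local efficiency of the indicator (Theorem 4.1, local bound, with the constant made explicit): Let (u, cu), (u_T, cu_T), (σ, cσ), (σ_T, cσ_T) be curl pairs and f square-ν-integrable, and assume the constitutive relations σ = μ⁻¹ cu and cσ + β u = f hold ν-a.e. on Ω. Then for every ν-measurable subset K ⊆ Ω, the local indicator η_K² := ∫_K μ⁻¹|μ σ_T − cu_T|² dν + ∫_K β⁻¹|cσ_T + β u_T − f|² dν satisfies η_K² ≤ 2 ( ∫_K (μ⁻¹|cu − cu_T|² + β|u − u_T|²) dν + ∫_K (β⁻¹|cσ − cσ_T|² + μ|σ − σ_T|²) dν ), i.e. η_K ≤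 √2 (|||u − u_T|||²_{μ,β,K} + |||σ − σ_T|||²_{β,μ,K})^{1/2}. -/
/-!
By the constitutive relations the two residuals split as
`μ σ_T - cu_T = μ (σ_T - σ) + (cu - cu_T)` and `cσ_T + β u_T - f = β (u_T - u) + (cσ_T - cσ)`.
For a weight `w > 0`, `(a + b)² ≤ 2 (a² + b²)` gives `w⁻¹ ‖w a + b‖² ≤ 2 (w ‖a‖² + w⁻¹ ‖b‖²)`,
so each residual is bounded pointwise by twice the curl term of one energy error plus the
zeroth-order term of the other; integrating over `K` and regrouping the four terms gives the estimate.
-/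

open MeasureTheory

section Pointwise

variable {E : Type*} [SeminormedAddCommGroup E] [NormedSpace ℝ E] {w : ℝ}

lemma inv_mul_norm_smul_add_sq_le (hw : 0 < w) (a b : E) :
    w⁻¹ * ‖w • a + b‖ ^ 2 ≤ 2 * (w⁻¹ * ‖b‖ ^ 2 + w * ‖a‖ ^ 2) := by
  have hnorm : ‖w • a + b‖ ≤ w * ‖a‖ + ‖b‖ := by
    simpa [norm_smul, abs_of_pos hw] using norm_add_le (w • a) b
  calc w⁻¹ * ‖w • a + b‖ ^ 2 ≤ w⁻¹ * (2 * ((w * ‖a‖) ^ 2 + ‖b‖ ^ 2)) := by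
        gcongr
        exact (pow_le_pow_left₀ (norm_nonneg _) hnorm 2).trans add_sq_le
    _ = 2 * (w⁻¹ * ‖b‖ ^ 2 + w * ‖a‖ ^ 2) := by
        field_simp
        ring

lemma constitutive_residual_le (hw : 0 < w) {σ σT c cT : E} (hσ : σ = w⁻¹ • c) :
    w⁻¹ * ‖w • σT - cT‖ ^ 2 ≤ 2 * (w⁻¹ * ‖c - cT‖ ^ 2 + w * ‖σ - σT‖ ^ 2) := by
  have hc : w • σ = c := by rw [hσ, smul_inv_smul₀ hw.ne']
  have hsplit : w • σT - cT = w • (σT - σ) + (c - cT) := by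
    rw [smul_sub, hc]; abel
  rw [hsplit, norm_sub_rev σ σT]
  exact inv_mul_norm_smul_add_sq_le hw _ _

lemma balance_residual_le (hw : 0 < w) {cσ u cσT uT f : E} (hf : cσ + w • u = f) :
    w⁻¹ * ‖cσT + w • uT - f‖ ^ 2 ≤ 2 * (w⁻¹ * ‖cσ - cσT‖ ^ 2 + w * ‖u - uT‖ ^ 2) := by
  have hsplit : cσT + w • uT - f = w • (uT - u) + (cσT - cσ) := by
    rw [← hf, smul_sub]; abel
  rw [hsplit, norm_sub_rev u uT, norm_sub_rev cσ cσT]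
  exact inv_mul_norm_smul_add_sq_le hw _ _

end Pointwise

section Integral

variable {Ω E : Type*} [MeasurableSpace Ω] {ν : Measure Ω} [NormedAddCommGroup E]
  {w : Ω → ℝ} {a b : ℝ}

lemma integrable_mul_norm_sq (hw : AEStronglyMeasurable w ν) (hbd : ∀ᵐ x ∂ν, w x ∈ Set.Icc a b)
    {g : Ω → E} (hg : MemLp g 2 ν) : Integrable (fun x => w x * ‖g x‖ ^ 2) ν :=
  hg.norm.integrable_sq.bdd_mul hw (c := max |a| |b|) <| hbd.mono fun _ hx =>
    abs_le_max_abs_abs hx.1 hx.2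

lemma integrable_inv_mul_norm_sq (hw : Measurable w) (ha : 0 < a)
    (hbd : ∀ᵐ x ∂ν, w x ∈ Set.Icc a b) {g : Ω → E} (hg : MemLp g 2 ν) :
    Integrable (fun x => (w x)⁻¹ * ‖g x‖ ^ 2) ν :=
  integrable_mul_norm_sq (a := b⁻¹) (b := a⁻¹) hw.inv.aestronglyMeasurable
    (hbd.mono fun _ hx => ⟨inv_anti₀ (ha.trans_le hx.1) hx.2, inv_anti₀ ha hx.1⟩) hg

lemma setIntegral_le_const_mul_add {F g h : Ω → ℝ} (c : ℝ) (K : Set Ω)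
    (hle : ∀ᵐ x ∂ν, F x ≤ c * (g x + h x)) (hg : Integrable g ν) (hh : Integrable h ν)
    (hF : 0 ≤ᵐ[ν] F) :
    ∫ x in K, F x ∂ν ≤ c * (∫ x in K, g x ∂ν + ∫ x in K, h x ∂ν) := by
  rw [← integral_add hg.integrableOn hh.integrableOn, ← integral_const_mul]
  exact integral_mono_of_nonneg (ae_restrict_of_ae hF) ((hg.add hh).const_mul c).integrableOn
    (ae_restrict_of_ae hle)

end Integral

theorem indicator_local_efficiency_general
    {Ω : Type*} [MeasurableSpace Ω] (ν : MeasureTheory.Measure Ω)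
    (μ β : Ω → ℝ) (m₁ m₂ b₁ b₂ : ℝ)
    (hm₁ : 0 < m₁) (hb₁ : 0 < b₁)
    (hμmeas : Measurable μ) (hβmeas : Measurable β)
    (hμbd : ∀ᵐ x ∂ν, m₁ ≤ μ x ∧ μ x ≤ m₂)
    (hβbd : ∀ᵐ x ∂ν, b₁ ≤ β x ∧ β x ≤ b₂)
    (u cu uT cuT σ cσ σT cσT f : Ω → EuclideanSpace ℝ (Fin 3))
    (hu : MemLp u 2 ν) (hcu : MemLp cu 2 ν)
    (huT : MemLp uT 2 ν) (hcuT : MemLp cuT 2 ν)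
    (hσ : MemLp σ 2 ν) (hcσ : MemLp cσ 2 ν)
    (hσT : MemLp σT 2 ν) (hcσT : MemLp cσT 2 ν)
    (hconst : ∀ᵐ x ∂ν, σ x = (μ x)⁻¹ • cu x)
    (hmageq : ∀ᵐ x ∂ν, cσ x + β x • u x = f x)
    (K : Set Ω) :
    (∫ x in K, (μ x)⁻¹ * ‖μ x • σT x - cuT x‖ ^ 2 ∂ν)
      + (∫ x in K, (β x)⁻¹ * ‖cσT x + β x • uT x - f x‖ ^ 2 ∂ν)
    ≤ 2 * ((∫ x in K, ((μ x)⁻¹ * ‖cu x - cuT x‖ ^ 2 + β x * ‖u x - uT x‖ ^ 2) ∂ν)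
      + (∫ x in K, ((β x)⁻¹ * ‖cσ x - cσT x‖ ^ 2 + μ x * ‖σ x - σT x‖ ^ 2) ∂ν)) := by
  have hμpos : ∀ᵐ x ∂ν, 0 < μ x := hμbd.mono fun _ hx => hm₁.trans_le hx.1
  have hβpos : ∀ᵐ x ∂ν, 0 < β x := hβbd.mono fun _ hx => hb₁.trans_le hx.1
  have hcuErr : Integrable (fun x => (μ x)⁻¹ * ‖cu x - cuT x‖ ^ 2) ν :=
    integrable_inv_mul_norm_sq hμmeas hm₁ hμbd (hcu.sub hcuT)
  have hcσErr : Integrable (fun x => (β x)⁻¹ * ‖cσ x - cσT x‖ ^ 2) ν :=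
    integrable_inv_mul_norm_sq hβmeas hb₁ hβbd (hcσ.sub hcσT)
  have huErr : Integrable (fun x => β x * ‖u x - uT x‖ ^ 2) ν :=
    integrable_mul_norm_sq hβmeas.aestronglyMeasurable hβbd (hu.sub huT)
  have hσErr : Integrable (fun x => μ x * ‖σ x - σT x‖ ^ 2) ν :=
    integrable_mul_norm_sq hμmeas.aestronglyMeasurable hμbd (hσ.sub hσT)
  have hconstitutive : ∀ᵐ x ∂ν, (μ x)⁻¹ * ‖μ x • σT x - cuT x‖ ^ 2
      ≤ 2 * ((μ x)⁻¹ * ‖cu x - cuT x‖ ^ 2 + μ x * ‖σ x - σT x‖ ^ 2) := by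
    filter_upwards [hμpos, hconst] with x hx hσx using constitutive_residual_le hx hσx
  have hbalance : ∀ᵐ x ∂ν, (β x)⁻¹ * ‖cσT x + β x • uT x - f x‖ ^ 2
      ≤ 2 * ((β x)⁻¹ * ‖cσ x - cσT x‖ ^ 2 + β x * ‖u x - uT x‖ ^ 2) := by
    filter_upwards [hβpos, hmageq] with x hx hfx using balance_residual_le hx hfx
  have hμK := setIntegral_le_const_mul_add 2 K hconstitutive hcuErr hσErr
    (hμpos.mono fun _ hx => by positivity)
  have hβK := setIntegral_le_const_mul_add 2 K hbalance hcσErr huErr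
    (hβpos.mono fun _ hx => by positivity)
  rw [integral_add hcuErr.integrableOn huErr.integrableOn,
    integral_add hcσErr.integrableOn hσErr.integrableOn]
  linarith

/-- Local efficiency of the indicator (Theorem 4.1, local bound, with explicit
constant): for every measurable K ⊆ Ω, the squared local indicator η_K² is
bounded by twice the sum of the squared local weighted energy errors. -/
theorem indicator_local_efficiency
    {Ω : Type*} [MeasurableSpace Ω] (ν : MeasureTheory.Measure Ω)
    (μ β : Ω → ℝ) (m₁ m₂ b₁ b₂ : ℝ)
    (hm₁ : 0 < m₁) (hm₁₂ : m₁ ≤ m₂) (hb₁ : 0 < b₁) (hb₁₂ : b₁ ≤ b₂)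
    (hμmeas : Measurable μ) (hβmeas : Measurable β)
    (hμbd : ∀ᵐ x ∂ν, m₁ ≤ μ x ∧ μ x ≤ m₂)
    (hβbd : ∀ᵐ x ∂ν, b₁ ≤ β x ∧ β x ≤ b₂)
    (u cu uT cuT σ cσ σT cσT f : Ω → EuclideanSpace ℝ (Fin 3))
    (hu : MemLp u 2 ν) (hcu : MemLp cu 2 ν)
    (huT : MemLp uT 2 ν) (hcuT : MemLp cuT 2 ν)
    (hσ : MemLp σ 2 ν) (hcσ : MemLp cσ 2 ν)
    (hσT : MemLp σT 2 ν) (hcσT : MemLp cσT 2 ν)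
    (hf : MemLp f 2 ν)
    (hconst : ∀ᵐ x ∂ν, σ x = (μ x)⁻¹ • cu x)
    (hmageq : ∀ᵐ x ∂ν, cσ x + β x • u x = f x)
    (K : Set Ω) (hK : MeasurableSet K) :
    (∫ x in K, (μ x)⁻¹ * ‖μ x • σT x - cuT x‖ ^ 2 ∂ν)
      + (∫ x in K, (β x)⁻¹ * ‖cσT x + β x • uT x - f x‖ ^ 2 ∂ν)
    ≤ 2 * ((∫ x in K, ((μ x)⁻¹ * ‖cu x - cuT x‖ ^ 2 + β x * ‖u x - uT x‖ ^ 2) ∂ν)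
      + (∫ x in K, ((β x)⁻¹ * ‖cσ x - cσT x‖ ^ 2 + μ x * ‖σ x - σT x‖ ^ 2) ∂ν)) :=
  indicator_local_efficiency_general ν μ β m₁ m₂ b₁ b₂ hm₁ hb₁ hμmeas hβmeas hμbd hβbd u cu uT cuT σ
    cσ σT cσT f hu hcu huT hcuT hσ hcσ hσT hcσT hconst hmageq K
end

section
/- Concrete global reliability identity on ℝ³ (Theorem 4.1 realized with the actual curl operator): Let μ, β : ℝ³ → ℝ be continuously differentiable with μ(x) ≥ m₁ > 0 and β(x) ≥ b₁ > 0 for all x. Let u : ℝ³ → ℝ³ be twice continuously differentiable with compact support, and let u_T, σ_T : ℝ³ → ℝ³ be continuously differentiable with compact support. Define the magnetizing field σ := μ⁻¹ (∇×u) and the source f := ∇×σ + β u. Then ∫_{ℝ³} μ⁻¹|μ σ_T − ∇×u_T|² dx + ∫_{ℝ³} β⁻¹|∇×σ_T + β u_T − f|² dx = ∫_{ℝ³} ( μ⁻¹|∇×(u − u_T)|² + β|u − u_T|² ) dx + ∫_{ℝ³} ( β⁻¹|∇×(σ − σ_T)|² + μ|σ − σ_T|² ) dx, all integrals being with respect to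 Lebesgue measure on ℝ³. -/
open MeasureTheory

/-- The i-th partial derivative of a vector field on ℝ³ (Fréchet derivative
applied to the i-th standard basis vector). -/
noncomputable def partialDeriv3 (i : Fin 3) (V : (Fin 3 → ℝ) → (Fin 3 → ℝ))
    (x : Fin 3 → ℝ) : Fin 3 → ℝ :=
  fderiv ℝ V x (Pi.single i 1)

/-- The curl of a vector field on ℝ³:
∇×V = (∂₂V₃ − ∂₃V₂, ∂₃V₁ − ∂₁V₃, ∂₁V₂ − ∂₂V₁). -/
noncomputable def curl3 (V : (Fin 3 → ℝ) → (Fin 3 → ℝ)) (x : Fin 3 → ℝ) :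
    Fin 3 → ℝ :=
  ![partialDeriv3 1 V x 2 - partialDeriv3 2 V x 1,
    partialDeriv3 2 V x 0 - partialDeriv3 0 V x 2,
    partialDeriv3 0 V x 1 - partialDeriv3 1 V x 0]

/-!
Write `e = u - uT` and `ε = σ - σT`. Because `μ σ = ∇×u` and `f = ∇×σ + β u`, the two residuals
are `∇×e - μ ε` and `-(∇×ε + β e)`. Expanding the weighted squares, the estimator is the sum of
the two energy norms plus `2 ∫ (∇×ε · e - ∇×e · ε)`, and this cross term vanishes because the
curl is symmetric on compactly supported `C¹` fields: `∇×V · W - V · ∇×W = div (V × W)`, and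
each `∂ᵢ (V × W)ᵢ` integrates to zero.
-/

open Matrix

theorem HasCompactSupport.integrable_of_continuous_of_eq_zero {X E F : Type*}
    [TopologicalSpace X] [MeasurableSpace X] [OpensMeasurableSpace X] {μ : Measure X}
    [IsFiniteMeasureOnCompacts μ] [NormedAddCommGroup E] [Zero F] {g : X → F} {h : X → E}
    (hg : HasCompactSupport g) (hh : Continuous h) (h0 : ∀ x, g x = 0 → h x = 0) :
    Integrable h μ :=
  hh.integrable_of_hasCompactSupport (hg.mono fun x hx hgx => hx (h0 x hgx))

noncomputable def curlOfFDeriv : ((Fin 3 → ℝ) →L[ℝ] (Fin 3 → ℝ)) →L[ℝ] (Fin 3 → ℝ) :=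
  let entry (i j : Fin 3) : ((Fin 3 → ℝ) →L[ℝ] (Fin 3 → ℝ)) →L[ℝ] ℝ :=
    (ContinuousLinearMap.proj (R := ℝ) (φ := fun _ : Fin 3 => ℝ) j).comp
      (ContinuousLinearMap.apply ℝ _ (Pi.single i 1))
  ContinuousLinearMap.pi ![entry 1 2 - entry 2 1, entry 2 0 - entry 0 2, entry 0 1 - entry 1 0]

theorem curl3_eq_curlOfFDeriv (V : (Fin 3 → ℝ) → (Fin 3 → ℝ)) :
    curl3 V = fun x => curlOfFDeriv (fderiv ℝ V x) := by
  ext x j; fin_cases j <;> rfl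

section

variable {V W : (Fin 3 → ℝ) → (Fin 3 → ℝ)}

theorem ContDiff.curl3 {m n : WithTop ℕ∞} (hV : ContDiff ℝ n V) (hmn : m + 1 ≤ n) :
    ContDiff ℝ m (curl3 V) := by
  rw [curl3_eq_curlOfFDeriv]
  exact curlOfFDeriv.contDiff.comp (hV.fderiv_right hmn)

theorem HasCompactSupport.curl3 (hV : HasCompactSupport V) : HasCompactSupport (curl3 V) := by
  rw [curl3_eq_curlOfFDeriv]
  exact (hV.fderiv ℝ).comp_left (map_zero _)

theorem curl3_sub {x : Fin 3 → ℝ} (hV : DifferentiableAt ℝ V x) (hW : DifferentiableAt ℝ W x) :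
    curl3 (V - W) x = curl3 V x - curl3 W x := by
  simp only [curl3_eq_curlOfFDeriv, fderiv_sub hV hW, map_sub]

theorem curl3_dotProduct (V : (Fin 3 → ℝ) → (Fin 3 → ℝ)) (x w : Fin 3 → ℝ) :
    curl3 V x ⬝ᵥ w = ∑ i, (partialDeriv3 i V x ⨯₃ w) i := by
  simp only [curl3, cross_apply, vec3_dotProduct, Fin.sum_univ_three, cons_val_zero,
    cons_val_one, cons_val]
  ring

theorem dotProduct_curl3 (W : (Fin 3 → ℝ) → (Fin 3 → ℝ)) (x v : Fin 3 → ℝ) :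
    v ⬝ᵥ curl3 W x = -∑ i, (v ⨯₃ partialDeriv3 i W x) i := by
  simp only [curl3, cross_apply, vec3_dotProduct, Fin.sum_univ_three, cons_val_zero,
    cons_val_one, cons_val]
  ring

theorem ContDiff.continuous_partialDeriv3 (hV : ContDiff ℝ 1 V) (i : Fin 3) :
    Continuous (partialDeriv3 i V) :=
  (hV.continuous_fderiv one_ne_zero).clm_apply continuous_const

theorem HasCompactSupport.partialDeriv3 (hV : HasCompactSupport V) (i : Fin 3) :
    HasCompactSupport (partialDeriv3 i V) :=
  hV.fderiv_apply ℝ _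

theorem integrable_cross_apply {f g : (Fin 3 → ℝ) → (Fin 3 → ℝ)} (hf : Continuous f)
    (hg : Continuous g) (hgs : HasCompactSupport g) (i : Fin 3) :
    Integrable fun x => (f x ⨯₃ g x) i :=
  hgs.integrable_of_continuous_of_eq_zero (by fun_prop) fun x hx => by simp [hx]

theorem integral_cross_partialDeriv3_apply (hV : ContDiff ℝ 1 V) (hW : ContDiff ℝ 1 W)
    (hWs : HasCompactSupport W) (i : Fin 3) :
    ∫ x, (V x ⨯₃ partialDeriv3 i W x) i = -∫ x, (partialDeriv3 i V x ⨯₃ W x) i :=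
  integral_bilinear_fderiv_right_eq_neg_left_of_integrable (μ := volume)
    (B := (crossProduct.compr₂ (LinearMap.proj i)).toContinuousBilinearMap)
    (integrable_cross_apply (hV.continuous_partialDeriv3 i) hW.continuous hWs i)
    (integrable_cross_apply hV.continuous (hW.continuous_partialDeriv3 i)
      (hWs.partialDeriv3 i) i)
    (integrable_cross_apply hV.continuous hW.continuous hWs i)
    (fun x _ => hV.differentiable one_ne_zero x) (fun x _ => hW.differentiable one_ne_zero x)

theorem integral_curl3_dotProduct (hV : ContDiff ℝ 1 V) (hW : ContDiff ℝ 1 W)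
    (hWs : HasCompactSupport W) :
    ∫ x, curl3 V x ⬝ᵥ W x = ∫ x, V x ⬝ᵥ curl3 W x := by
  simp only [curl3_dotProduct, dotProduct_curl3]
  rw [integral_neg, integral_finsetSum _ fun i _ => integrable_cross_apply
      (hV.continuous_partialDeriv3 i) hW.continuous hWs i,
    integral_finsetSum _ fun i _ => integrable_cross_apply
      hV.continuous (hW.continuous_partialDeriv3 i) (hWs.partialDeriv3 i) i]
  simp [integral_cross_partialDeriv3_apply hV hW hWs]

end

theorem inv_mul_sum_sq_add_smul {ι : Type*} [Fintype ι] {c : ℝ} (hc : c ≠ 0) (a b : ι → ℝ) :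
    c⁻¹ * ∑ i, (a + c • b) i ^ 2 = c⁻¹ * ∑ i, a i ^ 2 + c * ∑ i, b i ^ 2 + 2 * (a ⬝ᵥ b) := by
  simp only [dotProduct, Pi.add_apply, Pi.smul_apply, smul_eq_mul, Finset.mul_sum,
    ← Finset.sum_add_distrib]
  refine Finset.sum_congr rfl fun i _ => ?_
  field_simp
  ring

theorem inv_mul_sum_sq_sub_smul {ι : Type*} [Fintype ι] {c : ℝ} (hc : c ≠ 0) (a b : ι → ℝ) :
    c⁻¹ * ∑ i, (a - c • b) i ^ 2 = c⁻¹ * ∑ i, a i ^ 2 + c * ∑ i, b i ^ 2 - 2 * (a ⬝ᵥ b) := by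
  simp only [dotProduct, Pi.sub_apply, Pi.smul_apply, smul_eq_mul, Finset.mul_sum,
    ← Finset.sum_add_distrib, ← Finset.sum_sub_distrib]
  refine Finset.sum_congr rfl fun i _ => ?_
  field_simp
  ring

theorem integral_curl3_residuals_eq_energy {μ β : (Fin 3 → ℝ) → ℝ} (hμ : Continuous μ)
    (hβ : Continuous β) (hμ0 : ∀ x, μ x ≠ 0) (hβ0 : ∀ x, β x ≠ 0)
    {e ε : (Fin 3 → ℝ) → (Fin 3 → ℝ)} (he : ContDiff ℝ 1 e) (hes : HasCompactSupport e)
    (hε : ContDiff ℝ 1 ε) (hεs : HasCompactSupport ε) :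
    (∫ x, (μ x)⁻¹ * ∑ i, (curl3 e x - μ x • ε x) i ^ 2)
      + ∫ x, (β x)⁻¹ * ∑ i, (curl3 ε x + β x • e x) i ^ 2
    = (∫ x, (μ x)⁻¹ * ∑ i, curl3 e x i ^ 2 + β x * ∑ i, e x i ^ 2)
      + ∫ x, (β x)⁻¹ * ∑ i, curl3 ε x i ^ 2 + μ x * ∑ i, ε x i ^ 2 := by
  have hce : Continuous (curl3 e) := (he.curl3 (m := 0) le_rfl).continuous
  have hcε : Continuous (curl3 ε) := (hε.curl3 (m := 0) le_rfl).continuous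
  have hec := he.continuous
  have hεc := hε.continuous
  have hμi : Continuous fun x => (μ x)⁻¹ := hμ.inv₀ hμ0
  have hβi : Continuous fun x => (β x)⁻¹ := hβ.inv₀ hβ0
  have i1 : Integrable fun x => (μ x)⁻¹ * ∑ i, curl3 e x i ^ 2 :=
    hes.curl3.integrable_of_continuous_of_eq_zero (by fun_prop) fun x hx => by simp [hx]
  have i2 : Integrable fun x => β x * ∑ i, e x i ^ 2 :=
    hes.integrable_of_continuous_of_eq_zero (by fun_prop) fun x hx => by simp [hx]
  have i3 : Integrable fun x => (β x)⁻¹ * ∑ i, curl3 ε x i ^ 2 :=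
    hεs.curl3.integrable_of_continuous_of_eq_zero (by fun_prop) fun x hx => by simp [hx]
  have i4 : Integrable fun x => μ x * ∑ i, ε x i ^ 2 :=
    hεs.integrable_of_continuous_of_eq_zero (by fun_prop) fun x hx => by simp [hx]
  have i5 : Integrable fun x => curl3 e x ⬝ᵥ ε x :=
    hεs.integrable_of_continuous_of_eq_zero (by fun_prop) fun x hx => by simp [hx]
  have i6 : Integrable fun x => curl3 ε x ⬝ᵥ e x :=
    hes.integrable_of_continuous_of_eq_zero (by fun_prop) fun x hx => by simp [hx]
  simp only [inv_mul_sum_sq_sub_smul (hμ0 _), inv_mul_sum_sq_add_smul (hβ0 _)]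
  rw [integral_sub (i1.fun_add i4) (i5.const_mul 2),
    integral_add (i3.fun_add i2) (i6.const_mul 2), integral_add i1 i4, integral_add i3 i2,
    integral_add i1 i2, integral_add i3 i4, integral_const_mul, integral_const_mul,
    integral_curl3_dotProduct hε he hes]
  simp_rw [dotProduct_comm (ε _)]
  ring

/-- Concrete global reliability identity on ℝ³ (Theorem 4.1 realized with the
actual curl operator): with σ := μ⁻¹ ∇×u and f := ∇×σ + β u, the squared
estimator built from (u_T, σ_T) equals the sum of the squared weighted energy
norms of the two errors. -/
theorem estimator_reliability_identity_R3
    (μ β : (Fin 3 → ℝ) → ℝ) (m₁ b₁ : ℝ) (hm₁ : 0 < m₁) (hb₁ : 0 < b₁)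
    (hμ : ContDiff ℝ 1 μ) (hβ : ContDiff ℝ 1 β)
    (hμbd : ∀ x, m₁ ≤ μ x) (hβbd : ∀ x, b₁ ≤ β x)
    (u uT σT : (Fin 3 → ℝ) → (Fin 3 → ℝ))
    (hu : ContDiff ℝ 2 u) (husupp : HasCompactSupport u)
    (huT : ContDiff ℝ 1 uT) (huTsupp : HasCompactSupport uT)
    (hσT : ContDiff ℝ 1 σT) (hσTsupp : HasCompactSupport σT)
    (σ f : (Fin 3 → ℝ) → (Fin 3 → ℝ))
    (hσdef : σ = fun x => (μ x)⁻¹ • curl3 u x)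
    (hfdef : f = fun x => curl3 σ x + β x • u x) :
    (∫ x, (μ x)⁻¹ * (∑ i, (μ x • σT x - curl3 uT x) i ^ 2))
      + (∫ x, (β x)⁻¹ * (∑ i, (curl3 σT x + β x • uT x - f x) i ^ 2))
    = (∫ x, ((μ x)⁻¹ * (∑ i, (curl3 (u - uT) x) i ^ 2)
              + β x * (∑ i, (u x - uT x) i ^ 2)))
      + (∫ x, ((β x)⁻¹ * (∑ i, (curl3 (σ - σT) x) i ^ 2)
              + μ x * (∑ i, (σ x - σT x) i ^ 2))) := by
  have hμ0 : ∀ x, μ x ≠ 0 := fun x => (hm₁.trans_le (hμbd x)).ne'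
  have hβ0 : ∀ x, β x ≠ 0 := fun x => (hb₁.trans_le (hβbd x)).ne'
  have hu1 : ContDiff ℝ 1 u := hu.of_le one_le_two
  have hσ : ContDiff ℝ 1 σ := by
    subst hσdef
    exact (hμ.inv hμ0).smul (hu.curl3 (by norm_num))
  have hσs : HasCompactSupport σ := by
    subst hσdef
    exact husupp.curl3.smul_left (f := fun x => (μ x)⁻¹)
  have hμσ : ∀ x, μ x • σ x = curl3 u x := fun x => by
    simp [hσdef, smul_smul, mul_inv_cancel₀ (hμ0 x)]
  have hresidual_u : ∀ x, μ x • σT x - curl3 uT x = curl3 (u - uT) x - μ x • (σ - σT) x :=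
    fun x => by
      rw [curl3_sub (hu1.differentiable one_ne_zero x) (huT.differentiable one_ne_zero x), ← hμσ]
      simp only [Pi.sub_apply, smul_sub]
      abel
  have hresidual_σ : ∀ x, curl3 σT x + β x • uT x - f x
      = -(curl3 (σ - σT) x + β x • (u - uT) x) := fun x => by
    rw [hfdef, curl3_sub (hσ.differentiable one_ne_zero x) (hσT.differentiable one_ne_zero x)]
    simp only [Pi.sub_apply, smul_sub]
    abel
  simp only [hresidual_u, hresidual_σ, Pi.neg_apply, neg_sq]
  exact integral_curl3_residuals_eq_energy hμ.continuous hβ.continuous hμ0 hβ0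
    (hu1.sub huT) (husupp.sub huTsupp) (hσ.sub hσT) (hσs.sub hσTsupp)
end
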